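/- arXiv:1911.12761 — 10 statements merged into one kernel-verified Lean document; each statement's English description precedes it below -/
import Mathlib

section
/- Let $p$ be a prime and let $a, b, c$ be positive integers such that $c$ is a primitive divisor of $p^a - 1$. Set $u = (p^a - 1)/c$ and $\Psi_\ell(x) = 1 + x + \cdots + x^{\ell-1}$. Then $bc$ is a primitive divisor of $p^{ab} - 1$ if and only if $b \mid u \Psi_b(p^a)$ and $b \nmid u \Psi_\ell(p^a)$ for all $1 \le \ell \le b - 1$. -/
/-!
Write `q = p ^ a = c * u + 1`. Then `p ^ (a * ℓ) - 1 = c * (u * Ψ_ℓ(q))`, so `b * c` divides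
`p ^ (a * ℓ) - 1` exactly when `b` divides `u * Ψ_ℓ(q)`. Since `c` is a primitive divisor of
`p ^ a - 1`, the order of `p` modulo `c` is `a`; hence every `t` with `b * c ∣ p ^ t - 1` is a
multiple `a * ℓ`, and primitivity of `b * c` only has to be tested at the exponents `a * ℓ`.
-/

open Finset

def IsPrimitiveDivisor (e p m : ℕ) : Prop :=
  e ∣ p ^ m - 1 ∧ ∀ t, 0 < t → t < m → ¬ e ∣ p ^ t - 1

theorem Nat.pow_sub_one_eq_mul_geom_sum (q n : ℕ) :
    q ^ n - 1 = (q - 1) * ∑ i ∈ range n, q ^ i := by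
  rcases Nat.eq_zero_or_pos q with rfl | hq
  · rcases Nat.eq_zero_or_pos n with rfl | hn
    · simp
    · simp [zero_pow hn.ne']
  · have h := geom_sum_mul_add (q - 1) n
    rw [tsub_add_cancel_of_le hq] at h
    rw [← h, Nat.add_sub_cancel, mul_comm]

theorem Nat.dvd_pow_sub_one_iff_orderOf_dvd {p : ℕ} (hp : 0 < p) (c t : ℕ) :
    c ∣ p ^ t - 1 ↔ orderOf (p : ZMod c) ∣ t := by
  rw [orderOf_dvd_iff_pow_eq_one, ← Nat.modEq_iff_dvd' (Nat.one_le_pow _ _ hp), Nat.ModEq.comm,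
    ← ZMod.natCast_eq_natCast_iff, Nat.cast_pow, Nat.cast_one]

theorem IsPrimitiveDivisor.orderOf_eq {c p a : ℕ} (hp : 0 < p) (ha : 0 < a)
    (h : IsPrimitiveDivisor c p a) : orderOf (p : ZMod c) = a := by
  have hdvd : orderOf (p : ZMod c) ∣ a := (Nat.dvd_pow_sub_one_iff_orderOf_dvd hp c a).mp h.1
  have hpos : 0 < orderOf (p : ZMod c) := Nat.pos_of_dvd_of_pos hdvd ha
  refine (Nat.le_of_dvd ha hdvd).antisymm (not_lt.mp fun hlt => h.2 _ hpos hlt ?_)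
  exact (Nat.dvd_pow_sub_one_iff_orderOf_dvd hp c _).mpr dvd_rfl

theorem IsPrimitiveDivisor.dvd_of_dvd_pow_sub_one {c p a t : ℕ} (hp : 0 < p) (ha : 0 < a)
    (h : IsPrimitiveDivisor c p a) (ht : c ∣ p ^ t - 1) : a ∣ t :=
  h.orderOf_eq hp ha ▸ (Nat.dvd_pow_sub_one_iff_orderOf_dvd hp c t).mp ht

theorem mul_dvd_pow_mul_sub_one_iff {p a b c u : ℕ} (hc : 0 < c) (hcu : c * u = p ^ a - 1)
    (ℓ : ℕ) : b * c ∣ p ^ (a * ℓ) - 1 ↔ b ∣ u * ∑ i ∈ range ℓ, (p ^ a) ^ i := by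
  rw [pow_mul, Nat.pow_sub_one_eq_mul_geom_sum, ← hcu, mul_assoc, mul_comm b c]
  exact Nat.mul_dvd_mul_iff_left hc

theorem stmt_1_general (p a b c : ℕ) (hp : p.Prime) (ha : 0 < a) (hc : 0 < c)
    (hcdvd : c ∣ p ^ a - 1) (hcprim : ∀ t, 0 < t → t < a → ¬ c ∣ p ^ t - 1)
    (u : ℕ) (hu : u = (p ^ a - 1) / c) :
    ((b * c ∣ p ^ (a * b) - 1 ∧ ∀ t, 0 < t → t < a * b → ¬ b * c ∣ p ^ t - 1) ↔
      (b ∣ u * ∑ i ∈ Finset.range b, (p ^ a) ^ i ∧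
        ∀ ℓ, 1 ≤ ℓ → ℓ ≤ b - 1 → ¬ b ∣ u * ∑ i ∈ Finset.range ℓ, (p ^ a) ^ i)) := by
  have hprim : IsPrimitiveDivisor c p a := ⟨hcdvd, hcprim⟩
  have key := mul_dvd_pow_mul_sub_one_iff (b := b) hc (hu ▸ Nat.mul_div_cancel' hcdvd)
  rw [← key b]
  refine and_congr_right fun _ => ⟨fun h ℓ hℓ hℓb hdvd => ?_, fun h t ht htab hdvd => ?_⟩
  · exact h (a * ℓ) (Nat.mul_pos ha hℓ) (Nat.mul_lt_mul_left ha |>.mpr (by omega))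
      ((key ℓ).mpr hdvd)
  · obtain ⟨ℓ, rfl⟩ :=
      hprim.dvd_of_dvd_pow_sub_one hp.pos ha ((dvd_mul_left c b).trans hdvd)
    have hℓb : ℓ < b := Nat.lt_of_mul_lt_mul_left htab
    exact h ℓ (Nat.pos_of_mul_pos_left ht) (by omega) ((key ℓ).mp hdvd)

theorem stmt_1 (p a b c : ℕ) (hp : p.Prime) (ha : 0 < a) (hb : 0 < b) (hc : 0 < c)
    (hcdvd : c ∣ p ^ a - 1) (hcprim : ∀ t, 0 < t → t < a → ¬ c ∣ p ^ t - 1)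
    (u : ℕ) (hu : u = (p ^ a - 1) / c) :
    ((b * c ∣ p ^ (a * b) - 1 ∧ ∀ t, 0 < t → t < a * b → ¬ b * c ∣ p ^ t - 1) ↔
      (b ∣ u * ∑ i ∈ Finset.range b, (p ^ a) ^ i ∧
        ∀ ℓ, 1 ≤ ℓ → ℓ ≤ b - 1 → ¬ b ∣ u * ∑ i ∈ Finset.range ℓ, (p ^ a) ^ i)) :=
  stmt_1_general p a b c hp ha hc hcdvd hcprim u hu
end

section
/- Let $p$ and $b$ be distinct primes and let $a, c$ be positive integers such that $c$ is a primitive divisor of $p^a - 1$. Then $bc$ is a primitive divisor of $p^{ab} - 1$ if and only if $b \mid p^a - 1$ and $b \nmid (p^a - 1)/c$. -/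
open Finset

private lemma geom_fact (x k : ℕ) (hx : 1 ≤ x) :
    x ^ k - 1 = (x - 1) * ∑ i ∈ Finset.range k, x ^ i := by
  have hxk : 1 ≤ x ^ k := Nat.one_le_pow _ _ hx
  have : ((x : ℤ) ^ k - 1) = ((x : ℤ) - 1) * ∑ i ∈ Finset.range k, (x : ℤ) ^ i := by
    rw [mul_comm, geom_sum_mul]
  have h2 : ((x ^ k - 1 : ℕ) : ℤ) = (((x - 1) * ∑ i ∈ Finset.range k, x ^ i : ℕ) : ℤ) := by
    push_cast [Nat.cast_sub hxk, Nat.cast_sub hx]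
    exact this
  exact_mod_cast h2

/-- If `b` is prime, `c ∣ m`, `b*c ∣ m*s` and `b ∤ s`, then `b*c ∣ m`. -/
private lemma valuation_fact {b c m s : ℕ} (hb : b.Prime) (hc : 0 < c) (hm : 0 < m)
    (hcm : c ∣ m) (hbs : ¬ b ∣ s) (hdvd : b * c ∣ m * s) : b * c ∣ m := by
  set e := c.factorization b with he
  have hproj : b ^ e * (c / b ^ e) = c := Nat.ordProj_mul_ordCompl_eq_self c b
  have hndvd : ¬ b ∣ c / b ^ e := Nat.not_dvd_ordCompl hb hc.ne'
  have hbc : b * c = b ^ (e + 1) * (c / b ^ e) := by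
    rw [pow_succ, mul_comm (b ^ e) b, mul_assoc, hproj]
  have hb1 : b ^ (e + 1) ∣ m * s := dvd_trans ⟨c / b ^ e, hbc⟩ hdvd
  have hcop : Nat.Coprime (b ^ (e + 1)) s :=
    Nat.Coprime.pow_left _ ((Nat.Prime.coprime_iff_not_dvd hb).mpr hbs)
  have hbm : b ^ (e + 1) ∣ m := (Nat.Coprime.dvd_of_dvd_mul_right hcop) hb1
  have hcop2 : Nat.Coprime (b ^ (e + 1)) (c / b ^ e) :=
    Nat.Coprime.pow_left _ ((Nat.Prime.coprime_iff_not_dvd hb).mpr hndvd)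
  have hc'm : c / b ^ e ∣ m := dvd_trans (Dvd.intro_left _ hproj) hcm
  have : b ^ (e + 1) * (c / b ^ e) ∣ m := Nat.Coprime.mul_dvd_of_dvd_of_dvd hcop2 hbm hc'm
  rw [hbc]; exact this

theorem stmt_2 (p b a c : ℕ) (hp : p.Prime) (hb : b.Prime) (hpb : p ≠ b)
    (ha : 0 < a) (hc : 0 < c)
    (hcdvd : c ∣ p ^ a - 1) (hcprim : ∀ t, 0 < t → t < a → ¬ c ∣ p ^ t - 1) :
    ((b * c ∣ p ^ (a * b) - 1 ∧ ∀ t, 0 < t → t < a * b → ¬ b * c ∣ p ^ t - 1) ↔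
      (b ∣ p ^ a - 1 ∧ ¬ b ∣ (p ^ a - 1) / c)) := by
  haveI : Fact b.Prime := ⟨hb⟩
  have hp1 : 1 ≤ p := hp.one_lt.le
  have hpow1 : ∀ t : ℕ, 1 ≤ p ^ t := fun t => Nat.one_le_pow _ _ hp.pos
  -- divisibility of p^t - 1 by n in terms of casts
  have key : ∀ (n t : ℕ), (n ∣ p ^ t - 1) ↔ ((p : ZMod n) ^ t = 1) := by
    intro n t
    rw [← Nat.modEq_iff_dvd' (hpow1 t)]
    constructor
    · intro h
      have h2 : ((1 : ℕ) : ZMod n) = ((p ^ t : ℕ) : ZMod n) :=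
        (ZMod.natCast_eq_natCast_iff _ _ _).mpr h
      push_cast at h2
      exact h2.symm
    · intro h
      have h2 : ((p ^ t : ℕ) : ZMod n) = ((1 : ℕ) : ZMod n) := by push_cast; exact h
      exact ((ZMod.natCast_eq_natCast_iff _ _ _).mp h2).symm
  set x : ZMod c := (p : ZMod c) with hx
  have hxa : x ^ a = 1 := (key c a).mp hcdvd
  have hordx : orderOf x = a := by
    have hdvd : orderOf x ∣ a := orderOf_dvd_of_pow_eq_one hxa
    have hpos : 0 < orderOf x := Nat.pos_of_dvd_of_pos hdvd ha
    rcases lt_or_eq_of_le (Nat.le_of_dvd ha hdvd) with h | h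
    · exact absurd ((key c _).mpr (pow_orderOf_eq_one x)) (hcprim _ hpos h)
    · exact h
  have hcdvd_iff : ∀ t, c ∣ p ^ t - 1 ↔ a ∣ t := by
    intro t
    rw [key, ← hordx, orderOf_dvd_iff_pow_eq_one]
  set y : ZMod b := (p : ZMod b) with hy
  have hyne : y ≠ 0 := by
    rw [hy, Ne, ZMod.natCast_eq_zero_iff]
    rw [Nat.prime_dvd_prime_iff_eq hb hp]
    exact fun h => hpb h.symm
  have hfermat : y ^ (b - 1) = 1 := ZMod.pow_card_sub_one_eq_one hyne
  -- geometric sums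
  have hgeom : ∀ k : ℕ, p ^ (a * k) - 1 = (p ^ a - 1) * ∑ i ∈ Finset.range k, (p ^ a) ^ i := by
    intro k
    rw [pow_mul]
    exact geom_fact (p ^ a) k (hpow1 a)
  have hsum_cast : ∀ k : ℕ, y ^ a = 1 →
      ((∑ i ∈ Finset.range k, (p ^ a) ^ i : ℕ) : ZMod b) = (k : ZMod b) := by
    intro k hya
    push_cast
    have : ∀ i ∈ Finset.range k, (y ^ a) ^ i = 1 := by intro i _; rw [hya, one_pow]
    rw [Finset.sum_congr rfl this, Finset.sum_const, Finset.card_range, nsmul_eq_mul, mul_one]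
  have hpa1 : 1 < p ^ a := by
    calc 1 < p := hp.one_lt
    _ ≤ p ^ a := Nat.le_self_pow ha.ne' p
  have hdiv_iff : (b ∣ (p ^ a - 1) / c) ↔ b * c ∣ p ^ a - 1 :=
    (Nat.dvd_div_iff_mul_dvd hcdvd).trans (by rw [mul_comm])
  constructor
  · rintro ⟨hdvd, hprim⟩
    have hba : b ∣ p ^ a - 1 := by
      have hyab : y ^ (a * b) = 1 := (key b _).mp (dvd_trans (Dvd.intro c rfl) hdvd)
      have ho1 : orderOf y ∣ a * b := orderOf_dvd_of_pow_eq_one hyab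
      have ho2 : orderOf y ∣ b - 1 := orderOf_dvd_of_pow_eq_one hfermat
      have hb2 : 2 ≤ b := hb.two_le
      have hoy : 0 < orderOf y := Nat.pos_of_dvd_of_pos ho1 (Nat.mul_pos ha hb.pos)
      have hbo : ¬ b ∣ orderOf y := by
        intro h
        have h1 := Nat.le_of_dvd hoy h
        have h2 := Nat.le_of_dvd (by omega) ho2
        omega
      have hcop : Nat.Coprime (orderOf y) b :=
        ((Nat.Prime.coprime_iff_not_dvd hb).mpr hbo).symm
      have : orderOf y ∣ a := hcop.dvd_of_dvd_mul_right ho1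
      exact (key b a).mpr (orderOf_dvd_iff_pow_eq_one.mp this)
    refine ⟨hba, ?_⟩
    rw [hdiv_iff]
    intro hcon
    exact hprim a ha (lt_mul_iff_one_lt_right ha |>.mpr hb.one_lt) hcon
  · rintro ⟨hba, hnb⟩
    rw [hdiv_iff] at hnb
    have hya : y ^ a = 1 := (key b a).mp hba
    constructor
    · -- b*c ∣ p^(a*b) - 1
      rw [hgeom b]
      have hbs : b ∣ ∑ i ∈ Finset.range b, (p ^ a) ^ i := by
        rw [← ZMod.natCast_eq_zero_iff, hsum_cast b hya, ZMod.natCast_self]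
      rw [mul_comm]
      exact mul_dvd_mul hcdvd hbs
    · intro t ht htlt hdvd
      have hct : c ∣ p ^ t - 1 := dvd_trans (Dvd.intro_left b rfl) hdvd
      obtain ⟨k, rfl⟩ := (hcdvd_iff t).mp hct
      have hk : 0 < k := Nat.pos_of_ne_zero (by rintro rfl; simp at ht)
      have hkb : k < b := by
        by_contra h
        push_neg at h
        exact absurd (Nat.mul_le_mul_left a h) (by omega)
      have hbk : ¬ b ∣ k := Nat.not_dvd_of_pos_of_lt hk hkb
      have hbs : ¬ b ∣ ∑ i ∈ Finset.range k, (p ^ a) ^ i := by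
        rw [← ZMod.natCast_eq_zero_iff, hsum_cast k hya,
          ZMod.natCast_eq_zero_iff]
        exact hbk
      rw [hgeom k] at hdvd
      exact hnb (valuation_fact hb hc (by omega) hcdvd hbs hdvd)
end

section
/- Let $p$ be an odd prime and let $a, c$ be positive integers such that $c$ is a primitive divisor of $p^a - 1$. Then $2c$ is a primitive divisor of $p^{2a} - 1$ if and only if $(p^a - 1)/c$ is odd (equivalently, since $p$ is odd, $c$ is even and $(p^a-1)/c$ is odd). -/
theorem stmt_3 (p a c : ℕ) (hp : p.Prime) (hodd : Odd p) (ha : 0 < a) (hc : 0 < c)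
    (hcdvd : c ∣ p ^ a - 1) (hcprim : ∀ t, 0 < t → t < a → ¬ c ∣ p ^ t - 1) :
    ((2 * c ∣ p ^ (2 * a) - 1 ∧ ∀ t, 0 < t → t < 2 * a → ¬ 2 * c ∣ p ^ t - 1) ↔
      Odd ((p ^ a - 1) / c)) := by
  haveI : NeZero c := ⟨hc.ne'⟩
  have hp1 : 1 ≤ p := hp.one_lt.le
  have hiff : ∀ m : ℕ, c ∣ p ^ m - 1 ↔ (p : ZMod c) ^ m = 1 := by
    intro m
    constructor
    · intro h
      have h2 : ((p ^ m - 1 : ℕ) : ZMod c) = 0 := (ZMod.natCast_eq_zero_iff _ _).2 h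
      have h3 : ((p ^ m : ℕ) : ZMod c) - 1 = 0 := by
        rwa [Nat.cast_sub (Nat.one_le_pow _ _ hp.pos), Nat.cast_one] at h2
      push_cast at h3
      linear_combination h3
    · intro h
      have h3 : ((p ^ m - 1 : ℕ) : ZMod c) = 0 := by
        rw [Nat.cast_sub (Nat.one_le_pow _ _ hp.pos)]
        push_cast
        rw [h]; ring
      exact (ZMod.natCast_eq_zero_iff _ _).1 h3
  have h1 : (p : ZMod c) ^ a = 1 := (hiff a).1 hcdvd
  have hfin : IsOfFinOrder (p : ZMod c) := isOfFinOrder_iff_pow_eq_one.2 ⟨a, ha, h1⟩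
  set d := orderOf (p : ZMod c) with hd
  have hdpos : 0 < d := hfin.orderOf_pos
  have hda : d ∣ a := orderOf_dvd_of_pow_eq_one h1
  have hdeq : d = a := by
    by_contra hne
    have hlt : d < a := lt_of_le_of_ne (Nat.le_of_dvd ha hda) hne
    exact hcprim d hdpos hlt ((hiff d).2 (pow_orderOf_eq_one _))
  have hA : ∀ m : ℕ, c ∣ p ^ m - 1 ↔ a ∣ m := by
    intro m
    rw [hiff m, ← orderOf_dvd_iff_pow_eq_one, ← hd, hdeq]
  have hNc : p ^ a - 1 = c * ((p ^ a - 1) / c) := (Nat.mul_div_cancel' hcdvd).symm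
  constructor
  · rintro ⟨-, hprim2⟩
    rcases Nat.even_or_odd ((p ^ a - 1) / c) with he | ho
    · exfalso
      obtain ⟨k, hk⟩ := he
      have : 2 * c ∣ p ^ a - 1 := ⟨k, by rw [hNc, hk]; ring⟩
      exact hprim2 a ha (by omega) this
    · exact ho
  · intro ho
    constructor
    · have heq : p ^ (2 * a) - 1 = (p ^ a + 1) * (p ^ a - 1) := by
        have := Nat.sq_sub_sq (p ^ a) 1
        rw [one_pow, ← pow_mul, mul_comm a 2] at this
        simpa using this
      rw [heq]
      have h2dvd : 2 ∣ p ^ a + 1 := by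
        obtain ⟨k, hk⟩ := hodd.pow (n := a)
        exact ⟨k + 1, by omega⟩
      exact mul_dvd_mul h2dvd hcdvd
    · intro t ht htlt hdvd
      have hct : c ∣ p ^ t - 1 := (dvd_mul_left c 2).trans hdvd
      have hat : a ∣ t := (hA t).1 hct
      obtain ⟨k, hk⟩ := hat
      have hklt : k < 2 := Nat.lt_of_mul_lt_mul_left (by omega : a * k < a * 2)
      have hta : t = a := by
        rcases Nat.eq_zero_or_pos k with h0 | h0
        · rw [h0, mul_zero] at hk; omega
        · have h1' : k = 1 := by omega
          rw [h1', mul_one] at hk; exact hk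
      rw [hta] at hdvd
      have : 2 ∣ (p ^ a - 1) / c := by
        rw [hNc, mul_comm 2 c] at hdvd
        exact (Nat.mul_dvd_mul_iff_left hc).1 hdvd
      obtain ⟨m, hm⟩ := ho
      omega
end

section
/- Let $r$ be a prime and let $x, t$ be positive integers with $\gcd(x, r) = 1$. Then $r^t$ divides $\Psi_{r^t}(x) = 1 + x + \cdots + x^{r^t - 1}$ if and only if the multiplicative order of $x$ modulo $r^t$ equals $r^h$ for some $0 \le h \le t - 1$. -/
-- geometric sum splitting over a product range
lemma geom_split (x m n : ℕ) :
    ∑ k ∈ Finset.range (m * n), x ^ k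
      = (∑ i ∈ Finset.range m, (x ^ n) ^ i) * ∑ j ∈ Finset.range n, x ^ j := by
  induction m with
  | zero => simp
  | succ m ih =>
    have hmn : (m + 1) * n = m * n + n := by ring
    rw [hmn, Finset.sum_range_add, ih, Finset.sum_range_succ, add_mul]
    congr 1
    rw [Finset.mul_sum]
    refine Finset.sum_congr rfl fun j _ => ?_
    rw [← pow_mul, ← pow_add, mul_comm n m]

-- if x ≡ 1 mod r then the r-ary geometric sum of length r is divisible by r
lemma row_dvd (r x : ℕ) [NeZero r] (h1 : (x : ZMod r) = 1) :
    r ∣ ∑ j ∈ Finset.range r, x ^ j := by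
  rw [← ZMod.natCast_eq_zero_iff]
  push_cast
  simp [h1]

lemma sum_dvd (r x : ℕ) [NeZero r] (h1 : (x : ZMod r) = 1) :
    ∀ t, r ^ t ∣ ∑ i ∈ Finset.range (r ^ t), x ^ i := by
  intro t
  induction t generalizing x with
  | zero => simp
  | succ t ih =>
    have h1' : ((x ^ r : ℕ) : ZMod r) = 1 := by push_cast; simp [h1]
    have key := geom_split x (r ^ t) r
    rw [pow_succ, geom_split x (r ^ t) r]
    exact mul_dvd_mul (by simpa [← pow_mul] using ih (x ^ r) h1') (row_dvd r x h1)

-- lifting: if r ∣ x - 1 then r^(k+1) ∣ x^(r^k) - 1 (over ℤ)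
lemma lift_pow (r : ℕ) [NeZero r] (X : ℤ) (h1 : (r : ℤ) ∣ X - 1) :
    ∀ k : ℕ, (r : ℤ) ^ (k + 1) ∣ X ^ r ^ k - 1 := by
  intro k
  induction k with
  | zero => simpa using h1
  | succ k ih =>
    set y : ℤ := X ^ r ^ k with hy
    have hyr : (r : ℤ) ∣ y - 1 := dvd_trans (dvd_pow_self _ (Nat.succ_ne_zero k)) ih
    have hy1 : (y : ZMod r) = 1 := by
      have : ((y - 1 : ℤ) : ZMod r) = 0 := by
        rw [ZMod.intCast_zmod_eq_zero_iff_dvd]; exact_mod_cast hyr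
      push_cast at this
      linear_combination this
    have hrow : (r : ℤ) ∣ ∑ j ∈ Finset.range r, y ^ j := by
      have : ((∑ j ∈ Finset.range r, y ^ j : ℤ) : ZMod r) = 0 := by
        push_cast
        simp [hy1]
      exact_mod_cast (ZMod.intCast_zmod_eq_zero_iff_dvd _ _).mp this
    have hgoal : X ^ r ^ (k + 1) - 1 = (∑ j ∈ Finset.range r, y ^ j) * (y - 1) := by
      rw [geom_sum_mul, hy, ← pow_mul, ← pow_succ]
    rw [hgoal, pow_succ']
    exact mul_dvd_mul hrow ih

theorem stmt_4 (r x t : ℕ) (hr : r.Prime) (hx : 0 < x) (ht : 0 < t)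
    (hcop : Nat.gcd x r = 1) :
    (r ^ t ∣ ∑ i ∈ Finset.range (r ^ t), x ^ i ↔
      ∃ h, h ≤ t - 1 ∧ orderOf (x : ZMod (r ^ t)) = r ^ h) := by
  haveI : Fact r.Prime := ⟨hr⟩
  haveI : NeZero r := ⟨hr.pos.ne'⟩
  haveI : NeZero (r ^ t) := ⟨pow_ne_zero _ hr.pos.ne'⟩
  have hrt : r ∣ r ^ t := dvd_pow_self r ht.ne'
  -- key equivalence: both sides hold iff x ≡ 1 mod r
  have lhs_iff : (r ^ t ∣ ∑ i ∈ Finset.range (r ^ t), x ^ i) ↔ (x : ZMod r) = 1 := by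
    constructor
    · intro hdvd
      have hr1 : r ∣ ∑ i ∈ Finset.range (r ^ t), x ^ i := hrt.trans hdvd
      have h0 : ((∑ i ∈ Finset.range (r ^ t), x ^ i : ℕ) : ZMod r) = 0 := by
        rwa [ZMod.natCast_eq_zero_iff]
      push_cast at h0
      have := geom_sum_mul (x : ZMod r) (r ^ t)
      rw [h0, zero_mul] at this
      have hpe : (x : ZMod r) ^ r ^ t = 1 := by linear_combination -this
      rwa [ZMod.pow_card_pow] at hpe
    · intro h1
      exact sum_dvd r x h1 t
  have rhs_iff : (∃ h, h ≤ t - 1 ∧ orderOf (x : ZMod (r ^ t)) = r ^ h) ↔ (x : ZMod r) = 1 := by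
    constructor
    · rintro ⟨h, _, hord⟩
      have hpow : (x : ZMod (r ^ t)) ^ r ^ h = 1 := by
        rw [← hord]; exact pow_orderOf_eq_one _
      have hmod : x ^ r ^ h ≡ 1 [MOD r ^ t] := by
        rw [← ZMod.natCast_eq_natCast_iff]
        push_cast
        exact hpow
      have hmodr : x ^ r ^ h ≡ 1 [MOD r] := hmod.of_dvd hrt
      have : ((x ^ r ^ h : ℕ) : ZMod r) = ((1 : ℕ) : ZMod r) :=
        (ZMod.natCast_eq_natCast_iff _ _ _).mpr hmodr
      push_cast at this
      rwa [ZMod.pow_card_pow] at this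
    · intro h1
      have hd : (r : ℤ) ∣ (x : ℤ) - 1 := by
        have : (((x : ℤ) - 1 : ℤ) : ZMod r) = 0 := by push_cast; simp [h1]
        exact (ZMod.intCast_zmod_eq_zero_iff_dvd _ _).mp this
      have hlift := lift_pow r (x : ℤ) hd (t - 1)
      rw [Nat.sub_add_cancel ht] at hlift
      have hpow : (x : ZMod (r ^ t)) ^ r ^ (t - 1) = 1 := by
        have h0 : (((x : ℤ) ^ r ^ (t - 1) - 1 : ℤ) : ZMod (r ^ t)) = 0 := by
          rw [ZMod.intCast_zmod_eq_zero_iff_dvd]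
          exact_mod_cast hlift
        push_cast at h0
        linear_combination h0
      have hdvd : orderOf (x : ZMod (r ^ t)) ∣ r ^ (t - 1) :=
        orderOf_dvd_of_pow_eq_one hpow
      obtain ⟨h, hh, heq⟩ := (Nat.dvd_prime_pow hr).mp hdvd
      exact ⟨h, hh, heq⟩
  rw [lhs_iff, rhs_iff]
end

section
/- Let $r_1, \ldots, r_s$ be distinct primes, $t_1, \ldots, t_s$ positive integers, and set $b = r_1^{t_1} \cdots r_s^{t_s}$. Let $x$ be an integer coprime to $b$ such that for each $i$, the multiplicative order of $x$ modulo $r_i^{t_i}$ equals $r_i^{h_i}$ for some $0 \le h_i \le t_i - 1$. Then $b$ divides $\Psi_b(x) = 1 + x + \cdots + x^{b-1}$. -/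
/-!
Fix a prime power `p ^ t ∥ b`, let `p ^ h` be the order of `x` modulo `p ^ t` and write
`b = p ^ h * m`, so that `p ^ (t - h) ∣ m`. Then `Ψ_b(x) = Ψ_m(x ^ p ^ h) * Ψ_{p ^ h}(x)`.
Since `x ^ p ^ h ≡ 1 [ZMOD p ^ t]`, the first factor is `≡ m`, hence divisible by `p ^ (t - h)`.
Reducing modulo `p` and using Fermat, `x ≡ 1 [ZMOD p]`, and then `p ^ h ∣ Ψ_{p ^ h}(x)` by
induction on `h`, splitting `Ψ_{p ^ (k + 1)}(x) = Ψ_p(x ^ p ^ k) * Ψ_{p ^ k}(x)`.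
The prime powers dividing `b` are pairwise coprime, so their product `b` divides `Ψ_b(x)`.
-/

open Finset

theorem geom_sum_range_mul {R : Type*} [Semiring R] (x : R) (a d : ℕ) :
    ∑ j ∈ range (a * d), x ^ j = (∑ i ∈ range a, (x ^ d) ^ i) * ∑ j ∈ range d, x ^ j := by
  induction a with
  | zero => simp
  | succ a ih =>
    rw [Nat.succ_mul, sum_range_add, ih, sum_range_succ, add_mul, mul_sum]
    congr 1
    rw [mul_sum]
    exact sum_congr rfl fun j _ => by rw [← pow_mul, ← pow_add, Nat.mul_comm d a]

theorem Int.dvd_geom_sum_of_modEq_one {d y : ℤ} (hy : y ≡ 1 [ZMOD d]) {m : ℕ} (hm : d ∣ m) :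
    d ∣ ∑ i ∈ Finset.range m, y ^ i := by
  refine Int.modEq_zero_iff_dvd.mp ?_
  calc ∑ i ∈ Finset.range m, y ^ i ≡ ∑ i ∈ Finset.range m, (1 : ℤ) ^ i [ZMOD d] :=
        Int.ModEq.sum fun i _ => hy.pow i
    _ = m := one_geom_sum m
    _ ≡ 0 [ZMOD d] := Int.modEq_zero_iff_dvd.mpr hm

theorem Int.pow_dvd_geom_sum_of_modEq_one {p : ℕ} {x : ℤ} (hx : x ≡ 1 [ZMOD p]) (k : ℕ) :
    (p : ℤ) ^ k ∣ ∑ j ∈ Finset.range (p ^ k), x ^ j := by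
  induction k with
  | zero => simp
  | succ k ih =>
    rw [pow_succ', pow_succ', geom_sum_range_mul]
    refine mul_dvd_mul ?_ ih
    have hxp : x ^ p ^ k ≡ 1 [ZMOD p] := by simpa using hx.pow (p ^ k)
    exact Int.dvd_geom_sum_of_modEq_one hxp dvd_rfl

theorem Int.modEq_one_of_pow_prime_pow_modEq_one {p t h : ℕ} (hp : p.Prime) (ht : 1 ≤ t)
    {x : ℤ} (hx : x ^ p ^ h ≡ 1 [ZMOD p ^ t]) : x ≡ 1 [ZMOD p] := by
  have : Fact p.Prime := ⟨hp⟩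
  have hxp : x ^ p ^ h ≡ 1 [ZMOD p] :=
    hx.of_dvd (by exact_mod_cast dvd_pow_self p (by omega))
  rw [← ZMod.intCast_eq_intCast_iff] at hxp ⊢
  push_cast at hxp
  rw [ZMod.pow_card_pow] at hxp
  exact_mod_cast hxp

theorem Int.prime_pow_dvd_geom_sum {p t h n : ℕ} (hp : p.Prime) (ht : 1 ≤ t) (hht : h ≤ t)
    {x : ℤ} (hx : x ^ p ^ h ≡ 1 [ZMOD p ^ t]) (hn : p ^ t ∣ n) :
    (p : ℤ) ^ t ∣ ∑ j ∈ Finset.range n, x ^ j := by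
  obtain ⟨m, rfl⟩ : p ^ h ∣ n := (pow_dvd_pow p hht).trans hn
  rw [← pow_mul_pow_sub p hht] at hn
  have hm : p ^ (t - h) ∣ m := Nat.dvd_of_mul_dvd_mul_left (pow_pos hp.pos h) hn
  have hfirst : (p : ℤ) ^ (t - h) ∣ ∑ i ∈ Finset.range m, (x ^ p ^ h) ^ i := by
    refine Int.dvd_geom_sum_of_modEq_one (hx.of_dvd (pow_dvd_pow _ (Nat.sub_le t h))) ?_
    exact_mod_cast hm
  have hsecond := Int.pow_dvd_geom_sum_of_modEq_one
    (Int.modEq_one_of_pow_prime_pow_modEq_one hp ht hx) h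
  rw [mul_comm, geom_sum_range_mul, ← pow_mul_pow_sub (p : ℤ) hht, mul_comm]
  exact mul_dvd_mul hfirst hsecond

theorem stmt_5_general (s : ℕ) (r t : Fin s → ℕ)
    (hr : ∀ i, (r i).Prime) (hdist : Function.Injective r) (ht : ∀ i, 1 ≤ t i)
    (b : ℕ) (hb : b = ∏ i, r i ^ t i)
    (x : ℤ)
    (h : Fin s → ℕ) (hh : ∀ i, h i ≤ t i - 1)
    (hord : ∀ i, orderOf (x : ZMod (r i ^ t i)) = r i ^ h i) :
    (b : ℤ) ∣ ∑ i ∈ Finset.range b, x ^ i := by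
  have hlocal (i : Fin s) : (r i : ℤ) ^ t i ∣ ∑ j ∈ range b, x ^ j := by
    have hx : x ^ r i ^ h i ≡ 1 [ZMOD (r i : ℤ) ^ t i] := by
      have := pow_orderOf_eq_one (x : ZMod (r i ^ t i))
      rw [hord i] at this
      exact_mod_cast (ZMod.intCast_eq_intCast_iff _ _ _).mp (by push_cast; exact this)
    exact Int.prime_pow_dvd_geom_sum (hr i) (ht i) (by have := hh i; omega) hx
      (hb ▸ dvd_prod_of_mem _ (mem_univ i))
  have hcop : Pairwise fun i j => IsCoprime ((r i : ℤ) ^ t i) ((r j : ℤ) ^ t j) :=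
    fun i j hij => by
      exact_mod_cast Nat.isCoprime_iff_coprime.mpr
        (Nat.coprime_pow_primes (t i) (t j) (hr i) (hr j) (hdist.ne hij))
  simpa [hb] using Fintype.prod_dvd_of_coprime hcop hlocal

theorem stmt_5 (s : ℕ) (hs : 0 < s) (r t : Fin s → ℕ)
    (hr : ∀ i, (r i).Prime) (hdist : Function.Injective r) (ht : ∀ i, 1 ≤ t i)
    (b : ℕ) (hb : b = ∏ i, r i ^ t i)
    (x : ℤ) (hcop : Int.gcd x b = 1)
    (h : Fin s → ℕ) (hh : ∀ i, h i ≤ t i - 1)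
    (hord : ∀ i, orderOf (x : ZMod (r i ^ t i)) = r i ^ h i) :
    (b : ℤ) ∣ ∑ i ∈ Finset.range b, x ^ i :=
  stmt_5_general s r t hr hdist ht b hb x h hh hord
end

section
/- Let $r$ be an odd prime, and let $t, h$ be positive integers with $2h \le t$. Let $\beta$ be an integer coprime to $r$ whose multiplicative order modulo $r^t$ is $r^h$. Then $\Psi_{r^h}(\beta) \equiv r^h \pmod{r^t}$, where $\Psi_{r^h}(\beta) = 1 + \beta + \cdots + \beta^{r^h - 1}$. -/
/-!
Since `β ^ r ^ h ≡ 1 (mod r)` and `β ^ r ≡ β (mod r)` by Fermat, `β ≡ 1 (mod r)`; lifting the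
exponent then gives `r ^ (t - h) ∣ β - 1`. Writing `β = 1 + x`, the geometric sum is
`r ^ h + C(r ^ h, 2) x` modulo `x ^ 2`. Because `2 h ≤ t`, `r ^ t` divides `x ^ 2`, and since
`r ^ h` is odd it divides `C(r ^ h, 2)`, so `r ^ t` also divides `C(r ^ h, 2) x`.
-/

open Finset

theorem sq_dvd_geom_sum_one_add_sub {R : Type*} [CommRing R] (x : R) (n : ℕ) :
    x ^ 2 ∣ ∑ i ∈ range n, (1 + x) ^ i - n - n.choose 2 * x := by
  induction n with
  | zero => simp
  | succ n ih =>
    have hchoose : (n + 1).choose 2 = n.choose 2 + n := by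
      rw [Nat.choose_succ_succ', Nat.choose_one_right, add_comm]
    convert dvd_add ih (sq_dvd_add_pow_sub_sub x 1 n) using 1
    rw [sum_range_succ, hchoose]
    push_cast
    ring

theorem Odd.dvd_choose_two {n : ℕ} (hn : Odd n) : n ∣ n.choose 2 := by
  obtain ⟨k, rfl⟩ := hn
  refine ⟨k, ?_⟩
  rw [Nat.choose_two_right, Nat.add_sub_cancel, mul_comm 2 k, ← mul_assoc,
    Nat.mul_div_cancel _ two_pos]

theorem Int.dvd_sub_one_of_dvd_pow_prime_pow_sub_one {p : ℕ} [Fact p.Prime] {a : ℤ} {k : ℕ}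
    (h : (p : ℤ) ∣ a ^ p ^ k - 1) : (p : ℤ) ∣ a - 1 := by
  rw [← ZMod.intCast_zmod_eq_zero_iff_dvd] at h ⊢
  push_cast at h ⊢
  rwa [ZMod.pow_card_pow] at h

theorem Int.pow_sub_dvd_sub_one_of_pow_dvd_pow_prime_pow_sub_one {p : ℕ} (hp : p.Prime)
    (hodd : Odd p) {a : ℤ} {t h : ℕ} (hdvd : (p : ℤ) ^ t ∣ a ^ p ^ h - 1) :
    (p : ℤ) ^ (t - h) ∣ a - 1 := by
  have := Fact.mk hp
  rcases Nat.eq_zero_or_pos t with rfl | ht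
  · simp
  have hsub : (p : ℤ) ∣ a - 1 :=
    Int.dvd_sub_one_of_dvd_pow_prime_pow_sub_one (k := h) ((dvd_pow_self _ ht.ne').trans hdvd)
  have hndvd : ¬ (p : ℤ) ∣ a := fun ha =>
    Nat.prime_iff_prime_int.mp hp |>.not_dvd_one (by simpa using dvd_sub ha hsub)
  have hlte := Int.emultiplicity_pow_sub_pow hp hodd (y := 1) (by simpa using hsub) hndvd (p ^ h)
  rw [one_pow, emultiplicity_pow_self_of_prime hp.prime] at hlte
  rw [pow_dvd_iff_le_emultiplicity, hlte] at hdvd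
  rw [pow_dvd_iff_le_emultiplicity, ENat.natCast_sub]
  exact tsub_le_iff_right.mpr hdvd

theorem stmt_6_general (r t h : ℕ) (hr : r.Prime) (hrodd : Odd r)
    (h2h : 2 * h ≤ t) (β : ℤ)
    (hord : orderOf (β : ZMod (r ^ t)) = r ^ h) :
    (∑ i ∈ Finset.range (r ^ h), β ^ i) ≡ (r : ℤ) ^ h [ZMOD (r : ℤ) ^ t] := by
  have hpow : (r : ℤ) ^ t ∣ β ^ r ^ h - 1 := by
    rw [← Nat.cast_pow, ← ZMod.intCast_zmod_eq_zero_iff_dvd]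
    push_cast
    rw [← hord, pow_orderOf_eq_one, sub_self]
  obtain ⟨c, hc⟩ := Int.pow_sub_dvd_sub_one_of_pow_dvd_pow_prime_pow_sub_one hr hrodd hpow
  obtain ⟨k, hk⟩ := (hrodd.pow (n := h)).dvd_choose_two
  have hsq : (r : ℤ) ^ t ∣ (β - 1) ^ 2 := by
    rw [hc, mul_pow, ← pow_mul]
    exact (pow_dvd_pow _ (by omega)).mul_right _
  have hlin : (r : ℤ) ^ t ∣ ((r ^ h).choose 2 : ℕ) * (β - 1) :=
    ⟨k * c, by
      rw [hk, hc, ← Nat.sub_add_cancel (by omega : h ≤ t), pow_add, Nat.add_sub_cancel]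
      push_cast
      ring⟩
  have hgeom := sq_dvd_geom_sum_one_add_sub (β - 1) (r ^ h)
  rw [add_sub_cancel] at hgeom
  have hsum := dvd_add (hsq.trans hgeom) hlin
  rw [sub_add_cancel, Nat.cast_pow] at hsum
  exact (Int.modEq_iff_dvd.mpr hsum).symm

theorem stmt_6 (r t h : ℕ) (hr : r.Prime) (hrodd : Odd r) (ht : 0 < t) (hh : 0 < h)
    (h2h : 2 * h ≤ t) (β : ℤ) (hcop : Int.gcd β r = 1)
    (hord : orderOf (β : ZMod (r ^ t)) = r ^ h) :
    (∑ i ∈ Finset.range (r ^ h), β ^ i) ≡ (r : ℤ) ^ h [ZMOD (r : ℤ) ^ t] :=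
  stmt_6_general r t h hr hrodd h2h β hord
end

section
/- Let $r$ be an odd prime, and let $t, h, \ell$ be positive integers with $2h \le t$ and $r^h \nmid \ell$. Let $\beta$ be an integer coprime to $r$ whose multiplicative order modulo $r^t$ is $r^h$. Then $r^h$ does not divide $\Psi_\ell(\beta) = 1 + \beta + \cdots + \beta^{\ell - 1}$. -/
/-!
Since `β ^ (r ^ h) ≡ 1 [ZMOD r ^ t]` and `β ^ r ≡ β [ZMOD r]`, we get `β ≡ 1 [ZMOD r]`, so lifting
the exponent applies: `v_r(β ^ (r ^ h) - 1) = v_r(β - 1) + h`. As the left side is at least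
`t ≥ 2h`, `β ≡ 1 [ZMOD r ^ h]`, hence `Ψ_ℓ(β) ≡ ℓ [ZMOD r ^ h]`, and `r ^ h ∤ ℓ`.
-/

theorem sub_one_dvd_geom_sum_sub_card {R : Type*} [CommRing R] (x : R) (n : ℕ) :
    x - 1 ∣ ∑ i ∈ Finset.range n, x ^ i - n := by
  have h : ∑ i ∈ Finset.range n, x ^ i - n = ∑ i ∈ Finset.range n, (x ^ i - 1 ^ i) := by
    simp [Finset.sum_sub_distrib]
  exact h ▸ Finset.dvd_sum fun i _ => sub_dvd_pow_sub_pow x 1 i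

theorem Int.prime_dvd_sub_one_of_dvd_pow_prime_pow_sub_one {p : ℕ} [Fact p.Prime] {x : ℤ}
    {k : ℕ} (hx : (p : ℤ) ∣ x ^ p ^ k - 1) : (p : ℤ) ∣ x - 1 := by
  rw [← ZMod.intCast_zmod_eq_zero_iff_dvd] at hx ⊢
  push_cast at hx ⊢
  rwa [ZMod.pow_card_pow] at hx

theorem Int.pow_dvd_sub_one_of_pow_dvd_pow_prime_pow_sub_one {p : ℕ} (hp : p.Prime)
    (hp_odd : Odd p) {x : ℤ} {h t : ℕ} (hht : 2 * h ≤ t) (hx : (p : ℤ) ^ t ∣ x ^ p ^ h - 1) :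
    (p : ℤ) ^ h ∣ x - 1 := by
  have := Fact.mk hp
  rcases Nat.eq_zero_or_pos h with rfl | hh
  · simp
  have hp_dvd : (p : ℤ) ∣ x - 1 :=
    Int.prime_dvd_sub_one_of_dvd_pow_prime_pow_sub_one ((dvd_pow_self _ (by omega)).trans hx)
  have hp_ndvd : ¬ (p : ℤ) ∣ x := fun hpx => by
    have h1 : ((p : ℕ) : ℤ) ∣ ((1 : ℕ) : ℤ) := by simpa using dvd_sub hpx hp_dvd
    exact hp.not_dvd_one (Int.natCast_dvd_natCast.mp h1)
  have hlte := emultiplicity_pow_prime_pow_sub_pow_prime_pow (Nat.prime_iff_prime_int.mp hp)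
    hp_odd (by simpa using hp_dvd) hp_ndvd h
  have ht : (t : ℕ∞) ≤ emultiplicity (p : ℤ) (x - 1) + h := by
    rw [← hlte, one_pow]
    exact le_emultiplicity_of_pow_dvd hx
  refine pow_dvd_of_le_emultiplicity ?_
  generalize emultiplicity (p : ℤ) (x - 1) = e at ht
  induction e using ENat.recTopCoe with
  | top => exact le_top
  | coe e =>
    have : t ≤ e + h := by exact_mod_cast ht
    exact_mod_cast (by omega : h ≤ e)

theorem stmt_7_general (r t h ℓ : ℕ) (hr : r.Prime) (hrodd : Odd r)
    (h2h : 2 * h ≤ t) (hnd : ¬ r ^ h ∣ ℓ)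
    (β : ℤ)
    (hord : orderOf (β : ZMod (r ^ t)) = r ^ h) :
    ¬ ((r : ℤ) ^ h ∣ ∑ i ∈ Finset.range ℓ, β ^ i) := by
  have hpow : (r : ℤ) ^ t ∣ β ^ r ^ h - 1 := by
    rw [← Nat.cast_pow, ← ZMod.intCast_zmod_eq_zero_iff_dvd]
    push_cast
    rw [← hord, pow_orderOf_eq_one, sub_self]
  have hβ : (r : ℤ) ^ h ∣ β - 1 :=
    Int.pow_dvd_sub_one_of_pow_dvd_pow_prime_pow_sub_one hr hrodd h2h hpow
  intro hΨ
  have hℓ_dvd : (r : ℤ) ^ h ∣ ℓ := by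
    simpa using dvd_sub hΨ (hβ.trans (sub_one_dvd_geom_sum_sub_card β ℓ))
  exact hnd (by exact_mod_cast hℓ_dvd)

theorem stmt_7 (r t h ℓ : ℕ) (hr : r.Prime) (hrodd : Odd r) (ht : 0 < t) (hh : 0 < h)
    (hℓ : 0 < ℓ) (h2h : 2 * h ≤ t) (hnd : ¬ r ^ h ∣ ℓ)
    (β : ℤ) (hcop : Int.gcd β r = 1)
    (hord : orderOf (β : ZMod (r ^ t)) = r ^ h) :
    ¬ ((r : ℤ) ^ h ∣ ∑ i ∈ Finset.range ℓ, β ^ i) :=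
  stmt_7_general r t h ℓ hr hrodd h2h hnd β hord
end

section
/- Let $r$ be an odd prime and let $x, t$ be positive integers with $\gcd(x, r) = 1$. Suppose the multiplicative order of $x$ modulo $r^t$ is $r^h$ for some $0 \le h \le t - 1$. Then $r^t$ does not divide $\Psi_s(x) = 1 + x + \cdots + x^{s-1}$ for any $s$ with $1 \le s \le r^t - 1$. -/
/-! Since `x` has finite order `r ^ h` modulo `r ^ t`, we get `x ^ (r ^ h) ≡ 1 (mod r)`, and as
`a ^ r = a` in `𝔽_r` this means `x ≡ 1 (mod r)`. For such `x` the lifting-the-exponent lemma,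
applied to `x ^ s - 1 = (x - 1) Ψ_s(x)`, gives `v_r(Ψ_s(x)) = v_r(s)`. Hence `r ^ t ∣ Ψ_s(x)`
would force `r ^ t ∣ s`, which is impossible for `0 < s < r ^ t`. -/

theorem ZMod.eq_one_of_pow_prime_pow_eq_one {p : ℕ} [Fact p.Prime] {a : ZMod p} {h : ℕ}
    (ha : a ^ p ^ h = 1) : a = 1 := by
  rwa [ZMod.pow_card_pow] at ha

theorem Int.emultiplicity_geom_sum_of_dvd_sub_one {p : ℕ} (hp : p.Prime) (hp1 : Odd p) {x : ℤ}
    (hx : (p : ℤ) ∣ x - 1) (n : ℕ) :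
    emultiplicity (p : ℤ) (∑ i ∈ Finset.range n, x ^ i) = emultiplicity p n := by
  obtain rfl | hx1 := eq_or_ne x 1
  · simp [Int.natCast_emultiplicity]
  have hpx : ¬(p : ℤ) ∣ x := fun hpx ↦
    hp.not_dvd_one (Int.natCast_dvd_natCast.mp (by simpa using dvd_sub hpx hx))
  have hlte := Int.emultiplicity_pow_sub_pow hp hp1 hx hpx n
  rw [one_pow, ← geom_sum_mul, emultiplicity_mul (Nat.prime_iff_prime_int.mp hp), add_comm] at hlte
  have hfin : FiniteMultiplicity (p : ℤ) (x - 1) :=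
    Int.finiteMultiplicity_iff.mpr ⟨by exact_mod_cast hp.ne_one, sub_ne_zero.mpr hx1⟩
  exact WithTop.add_left_cancel (finiteMultiplicity_iff_emultiplicity_ne_top.mp hfin) hlte

theorem Int.pow_dvd_of_pow_dvd_geom_sum {p : ℕ} (hp : p.Prime) (hp1 : Odd p) {x : ℤ}
    (hx : (p : ℤ) ∣ x - 1) {k n : ℕ} (h : (p : ℤ) ^ k ∣ ∑ i ∈ Finset.range n, x ^ i) : p ^ k ∣ n := by
  apply pow_dvd_of_le_emultiplicity
  rw [← Int.emultiplicity_geom_sum_of_dvd_sub_one hp hp1 hx]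
  exact le_emultiplicity_of_pow_dvd h

theorem stmt_10_general (r x t h : ℕ) (hr : r.Prime) (hrodd : Odd r)
    (hord : orderOf (x : ZMod (r ^ t)) = r ^ h) :
    ∀ s, 1 ≤ s → s ≤ r ^ t - 1 → ¬ r ^ t ∣ ∑ i ∈ Finset.range s, x ^ i := by
  have : Fact r.Prime := ⟨hr⟩
  intro s hs1 hs2 hdvd
  have ht : t ≠ 0 := by rintro rfl; simp only [pow_zero, Nat.sub_self] at hs2; omega
  have hxr : (x : ZMod r) = 1 := by
    have hpow : (x : ZMod (r ^ t)) ^ r ^ h = 1 := hord ▸ pow_orderOf_eq_one _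
    have := congrArg (ZMod.castHom (dvd_pow_self r ht) (ZMod r)) hpow
    rw [map_pow, map_one, map_natCast] at this
    exact ZMod.eq_one_of_pow_prime_pow_eq_one this
  have hx : (r : ℤ) ∣ x - 1 := by
    simpa using (ZMod.intCast_eq_intCast_iff_dvd_sub 1 x r).mp (by exact_mod_cast hxr.symm)
  have hrs := Int.pow_dvd_of_pow_dvd_geom_sum hr hrodd hx (k := t) (n := s) (by exact_mod_cast hdvd)
  have hrt := Nat.le_of_dvd (by omega) hrs
  omega

theorem stmt_10 (r x t h : ℕ) (hr : r.Prime) (hrodd : Odd r) (hx : 0 < x) (ht : 0 < t)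
    (hcop : Nat.gcd x r = 1) (hh : h ≤ t - 1)
    (hord : orderOf (x : ZMod (r ^ t)) = r ^ h) :
    ∀ s, 1 ≤ s → s ≤ r ^ t - 1 → ¬ r ^ t ∣ ∑ i ∈ Finset.range s, x ^ i :=
  stmt_10_general r x t h hr hrodd hord
end

section
/- Let $p$ be an odd prime, let $a, c$ be positive integers with $c$ a primitive divisor of $p^a - 1$, and let $b = 2^t$ for some integer $t \ge 2$. Then $bc$ is a primitive divisor of $p^{ab} - 1$ if and only if $p^a \equiv 1 \pmod 4$ and $(p^a - 1)/c$ is odd. -/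
/-!
Since `c` is a primitive divisor of `p ^ a - 1`, the multiplicative order of `p` modulo `c` is `a`,
so the order of `p` modulo `2 ^ t * c` is `a` times the order of `q = p ^ a` modulo `2 ^ t * c`.
The latter is `2 ^ t` exactly when `2 ^ t * c` divides `q ^ 2 ^ t - 1` but not `q ^ 2 ^ (t - 1) - 1`.
As `c ∣ q - 1`, only the `2`-adic valuations matter, and lifting the exponent gives
`v₂ (q ^ 2 ^ k - 1) = v₂ (q + 1) + v₂ (q - 1) + k - 1` for `k ≥ 1`. Both conditions together say
`v₂ c = v₂ (q + 1) + v₂ (q - 1) - 1`, and since `v₂ c ≤ v₂ (q - 1)` and `v₂ (q + 1) ≥ 1`, this means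
`v₂ (q + 1) = 1` (i.e. `q ≡ 1 mod 4`) and `v₂ c = v₂ (q - 1)` (i.e. `(q - 1) / c` is odd).
-/

namespace Nat

def IsPrimitiveDivisor (e p m : ℕ) : Prop :=
  e ∣ p ^ m - 1 ∧ ∀ s, 0 < s → s < m → ¬ e ∣ p ^ s - 1

theorem natCast_pow_eq_one_iff_dvd {p e : ℕ} (hp : 0 < p) (n : ℕ) :
    (p : ZMod e) ^ n = 1 ↔ e ∣ p ^ n - 1 := by
  rw [← ZMod.natCast_eq_zero_iff, Nat.cast_sub (Nat.one_le_pow _ _ hp), sub_eq_zero]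
  push_cast
  rfl

theorem isPrimitiveDivisor_iff_orderOf_eq {e p m : ℕ} (hp : 0 < p) (hm : 0 < m) :
    IsPrimitiveDivisor e p m ↔ orderOf (p : ZMod e) = m := by
  simp only [IsPrimitiveDivisor, orderOf_eq_iff hm, ← natCast_pow_eq_one_iff_dvd hp]
  exact and_congr Iff.rfl ⟨fun h s hs hs0 => h s hs0 hs, fun h s hs0 hs => h s hs hs0⟩

end Nat

section OrderOf

variable {G : Type*} [Monoid G] {x : G}

theorem orderOf_eq_mul_iff_orderOf_pow_eq {a m : ℕ} (ha : a ≠ 0) (hdvd : a ∣ orderOf x) :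
    orderOf x = a * m ↔ orderOf (x ^ a) = m := by
  obtain ⟨k, hk⟩ := hdvd
  rw [orderOf_pow_of_dvd ha ⟨k, hk⟩, hk, Nat.mul_div_cancel_left _ (Nat.pos_of_ne_zero ha),
    Nat.mul_right_inj ha]

theorem orderOf_eq_prime_pow_succ_iff {p n : ℕ} [hp : Fact p.Prime] :
    orderOf x = p ^ (n + 1) ↔ x ^ p ^ (n + 1) = 1 ∧ ¬ x ^ p ^ n = 1 := by
  refine ⟨fun h => ⟨h ▸ pow_orderOf_eq_one x, ?_⟩, fun h => orderOf_eq_prime_pow h.2 h.1⟩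
  exact pow_ne_one_of_lt_orderOf (pow_ne_zero _ hp.out.ne_zero)
    (h ▸ Nat.pow_lt_pow_right hp.out.one_lt n.lt_succ_self)

end OrderOf

section PadicVal

theorem pow_mul_dvd_iff_le_padicValNat {p t c M : ℕ} [Fact p.Prime] (hM : M ≠ 0) (hc : c ∣ M) :
    p ^ t * c ∣ M ↔ t + padicValNat p c ≤ padicValNat p M := by
  obtain ⟨k, rfl⟩ := hc
  obtain ⟨hc0, hk0⟩ := mul_ne_zero_iff.mp hM
  rw [mul_comm (p ^ t), mul_dvd_mul_iff_left hc0, padicValNat_dvd_iff_le hk0,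
    padicValNat.mul hc0 hk0]
  omega

theorem odd_div_iff_padicValNat_two_eq {c M : ℕ} (hM : M ≠ 0) (hc : c ∣ M) :
    Odd (M / c) ↔ padicValNat 2 c = padicValNat 2 M := by
  obtain ⟨k, rfl⟩ := hc
  obtain ⟨hc0, hk0⟩ := mul_ne_zero_iff.mp hM
  rw [Nat.mul_div_cancel_left _ (Nat.pos_of_ne_zero hc0), padicValNat.mul hc0 hk0,
    Nat.odd_iff, ← Nat.two_dvd_ne_zero]
  refine ⟨fun h => by rw [padicValNat.eq_zero_of_not_dvd h, add_zero], fun h h2 => ?_⟩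
  have := one_le_padicValNat_of_dvd hk0 h2
  omega

theorem padicValNat_two_pow_two_pow_sub_one {q k : ℕ} (hq1 : 1 < q) (hq : Odd q) (hk : k ≠ 0) :
    padicValNat 2 (q ^ 2 ^ k - 1) + 1 = padicValNat 2 (q + 1) + padicValNat 2 (q - 1) + k := by
  rw [padicValNat.pow_two_sub_one hq1 (Nat.not_even_iff_odd.mpr hq ∘ even_iff_two_dvd.mpr)
    (pow_ne_zero _ two_ne_zero) ((Nat.even_pow' hk).mpr even_two), padicValNat.prime_pow]

theorem two_pow_mul_dvd_pow_two_pow_sub_one_iff {q c t k : ℕ} (hq1 : 1 < q) (hq : Odd q)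
    (hc : c ∣ q - 1) (hk : k ≠ 0) :
    2 ^ t * c ∣ q ^ 2 ^ k - 1 ↔
      t + padicValNat 2 c + 1 ≤ padicValNat 2 (q + 1) + padicValNat 2 (q - 1) + k := by
  have hqk : q ^ 2 ^ k - 1 ≠ 0 := Nat.sub_ne_zero_of_lt (Nat.one_lt_pow (by positivity) hq1)
  have hc_dvd : c ∣ q ^ 2 ^ k - 1 := hc.trans (by simpa using Nat.sub_dvd_pow_sub_pow q 1 _)
  rw [pow_mul_dvd_iff_le_padicValNat hqk hc_dvd, ← padicValNat_two_pow_two_pow_sub_one hq1 hq hk]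
  omega

theorem one_le_padicValNat_two_add_one {q : ℕ} (hq : Odd q) : 1 ≤ padicValNat 2 (q + 1) :=
  one_le_padicValNat_of_dvd q.add_one_ne_zero (even_iff_two_dvd.mp hq.add_one)

theorem padicValNat_two_add_one_eq_one_iff {q : ℕ} (hq : Odd q) :
    padicValNat 2 (q + 1) = 1 ↔ q % 4 = 1 := by
  have h2 := one_le_padicValNat_two_add_one hq
  have h4 : 4 ∣ q + 1 ↔ 2 ≤ padicValNat 2 (q + 1) :=
    padicValNat_dvd_iff_le (p := 2) (n := 2) q.add_one_ne_zero
  have := Nat.odd_iff.mp hq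
  by_cases h : 4 ∣ q + 1
  · have := h4.mp h
    omega
  · have := mt h4.mpr h
    omega

end PadicVal

theorem stmt_12_general (p a c t : ℕ) (hp : p.Prime) (hodd : Odd p) (ha : 0 < a)
    (ht : 2 ≤ t)
    (hcdvd : c ∣ p ^ a - 1) (hcprim : ∀ s, 0 < s → s < a → ¬ c ∣ p ^ s - 1) :
    ((2 ^ t * c ∣ p ^ (a * 2 ^ t) - 1 ∧
        ∀ s, 0 < s → s < a * 2 ^ t → ¬ 2 ^ t * c ∣ p ^ s - 1) ↔
      (p ^ a % 4 = 1 ∧ Odd ((p ^ a - 1) / c))) := by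
  obtain ⟨j, rfl⟩ : ∃ j, t = j + 1 + 1 := ⟨t - 2, by omega⟩
  set q := p ^ a
  have hq1 : 1 < q := Nat.one_lt_pow ha.ne' hp.one_lt
  have hq : Odd q := hodd.pow
  have hq0 : q - 1 ≠ 0 := by omega
  have hord : orderOf (p : ZMod c) = a :=
    (Nat.isPrimitiveDivisor_iff_orderOf_eq hp.pos ha).mp ⟨hcdvd, hcprim⟩
  have hord_dvd : a ∣ orderOf (p : ZMod (2 ^ (j + 1 + 1) * c)) := by
    simpa [hord] using
      orderOf_map_dvd (ZMod.castHom (dvd_mul_left c _) (ZMod c)).toMonoidHom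
        (p : ZMod (2 ^ (j + 1 + 1) * c))
  have hvc : padicValNat 2 c ≤ padicValNat 2 (q - 1) :=
    (padicValNat_dvd_iff_le hq0).mp (pow_padicValNat_dvd.trans hcdvd)
  change Nat.IsPrimitiveDivisor _ p _ ↔ _
  rw [Nat.isPrimitiveDivisor_iff_orderOf_eq hp.pos (by positivity),
    orderOf_eq_mul_iff_orderOf_pow_eq ha.ne' hord_dvd, orderOf_eq_prime_pow_succ_iff,
    ← Nat.cast_pow, Nat.natCast_pow_eq_one_iff_dvd (by omega),
    Nat.natCast_pow_eq_one_iff_dvd (by omega),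
    two_pow_mul_dvd_pow_two_pow_sub_one_iff hq1 hq hcdvd (by omega),
    two_pow_mul_dvd_pow_two_pow_sub_one_iff hq1 hq hcdvd (by omega),
    ← padicValNat_two_add_one_eq_one_iff hq, odd_div_iff_padicValNat_two_eq hq0 hcdvd]
  have := one_le_padicValNat_two_add_one hq
  omega

theorem stmt_12 (p a c t : ℕ) (hp : p.Prime) (hodd : Odd p) (ha : 0 < a) (hc : 0 < c)
    (ht : 2 ≤ t)
    (hcdvd : c ∣ p ^ a - 1) (hcprim : ∀ s, 0 < s → s < a → ¬ c ∣ p ^ s - 1) :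
    ((2 ^ t * c ∣ p ^ (a * 2 ^ t) - 1 ∧
        ∀ s, 0 < s → s < a * 2 ^ t → ¬ 2 ^ t * c ∣ p ^ s - 1) ↔
      (p ^ a % 4 = 1 ∧ Odd ((p ^ a - 1) / c))) :=
  stmt_12_general p a c t hp hodd ha ht hcdvd hcprim
end

section
/- Let $p$ be an odd prime, $m$ an even positive integer, and $k$ a divisor of $p^{m/2} + 1$ with $1 < k < p^{m/2} + 1$. Then $n = (p^m - 1)/k$ is a primitive divisor of $p^m - 1$, i.e., $n \mid p^m - 1$ and $n \nmid p^t - 1$ for all $1 \le t < m$. -/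
lemma aux_pow_sub_one_dvd (p s : ℕ) (hp : 2 ≤ p) (hs : 0 < s) :
    ∀ t, p ^ s - 1 ∣ p ^ t - 1 → s ∣ t := by
  intro t
  induction t using Nat.strong_induction_on with
  | _ t ih =>
    intro h
    rcases lt_or_ge t s with hts | hts
    · rcases Nat.eq_zero_or_pos t with rfl | ht
      · exact dvd_zero s
      · exfalso
        have h1 : 2 ≤ p ^ t := by
          calc 2 = 2 ^ 1 := rfl
          _ ≤ p ^ t := Nat.pow_le_pow_left hp t |>.trans' (Nat.pow_le_pow_right (by omega) ht)
        have h2 : p ^ t < p ^ s := Nat.pow_lt_pow_right (by omega) hts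
        have := Nat.le_of_dvd (by omega) h
        omega
    · have hpe : p ^ (t - s) * p ^ s = p ^ t := by
        rw [← pow_add]; congr 1; omega
      have hmul : p ^ (t - s) * (p ^ s - 1) = p ^ t - p ^ (t - s) := by
        rw [Nat.mul_sub, hpe, Nat.mul_one]
      have h1 : 1 ≤ p ^ (t - s) := Nat.one_le_pow _ _ (by omega)
      have h2 : p ^ (t - s) ≤ p ^ t := Nat.pow_le_pow_right (by omega) (by omega)
      have hd1 : p ^ s - 1 ∣ p ^ t - p ^ (t - s) := Dvd.intro_left _ hmul
      have key : p ^ s - 1 ∣ p ^ (t - s) - 1 := by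
        have := Nat.dvd_sub h hd1
        have heq : p ^ t - 1 - (p ^ t - p ^ (t - s)) = p ^ (t - s) - 1 := by omega
        rwa [heq] at this
      have hst : s ∣ t - s := ih (t - s) (by omega) key
      have : t - s + s = t := by omega
      rw [← this]
      exact Nat.dvd_add hst (dvd_refl s)

theorem stmt_16 (p m k : ℕ) (hp : p.Prime) (hodd : Odd p) (hm : 0 < m) (hme : Even m)
    (hk : k ∣ p ^ (m / 2) + 1) (hk1 : 1 < k) (hk2 : k < p ^ (m / 2) + 1) :
    (p ^ m - 1) / k ∣ p ^ m - 1 ∧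
      ∀ t, 1 ≤ t → t < m → ¬ (p ^ m - 1) / k ∣ p ^ t - 1 := by
  obtain ⟨s, hms⟩ := hme
  have hs2 : m / 2 = s := by omega
  rw [hs2] at hk hk2
  have hs : 0 < s := by omega
  have hp2 : 2 ≤ p := hp.two_le
  have hxs : 2 ≤ p ^ s := by
    calc 2 = 2 ^ 1 := rfl
    _ ≤ p ^ s := (Nat.pow_le_pow_left hp2 s).trans' (Nat.pow_le_pow_right (by omega) hs)
  have hfact : p ^ m - 1 = (p ^ s - 1) * (p ^ s + 1) := by
    have hx : p ^ m = p ^ s * p ^ s := by rw [← pow_add, hms]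
    have : (p ^ s - 1) * (p ^ s + 1) = p ^ s * p ^ s - 1 := by
      rw [Nat.sub_mul, Nat.mul_add, Nat.mul_one, Nat.one_mul]; omega
    omega
  -- c := (p^s + 1) / k
  obtain ⟨c, hc⟩ := hk
  have hc2 : 2 ≤ c := by
    rcases c with _ | _ | c
    · simp at hc
    · simp at hc; omega
    · omega
  have hn : (p ^ m - 1) / k = (p ^ s - 1) * c := by
    rw [hfact, hc, ← Nat.mul_assoc, Nat.mul_comm (p ^ s - 1) k, Nat.mul_assoc,
      Nat.mul_div_cancel_left _ (by omega : 0 < k)]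
  constructor
  · rw [hn, hfact, hc]
    exact ⟨k, by ring⟩
  · intro t ht1 ht2 hdvd
    rw [hn] at hdvd
    have hdvd' : p ^ s - 1 ∣ p ^ t - 1 := (dvd_mul_right _ c).trans hdvd
    have hst : s ∣ t := aux_pow_sub_one_dvd p s hp2 hs t hdvd'
    obtain ⟨q, rfl⟩ := hst
    have hq1 : q = 1 := by
      rcases q with _ | _ | q
      · rw [Nat.mul_zero] at ht1; omega
      · rfl
      · exfalso
        have : s * 2 ≤ s * (q + 1 + 1) := Nat.mul_le_mul_left s (show 2 ≤ q + 1 + 1 by omega)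
        omega
    subst hq1
    rw [Nat.mul_one] at hdvd
    have h1 := Nat.le_of_dvd (by omega) hdvd
    have h2 : (p ^ s - 1) * 2 ≤ (p ^ s - 1) * c := Nat.mul_le_mul_left _ hc2
    omega
end
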